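/- arXiv:math/9904109 — 5 statements merged into one kernel-verified Lean document; each statement's English description precedes it below -/
import Mathlib

section
/- With S_{λ,μ} = |z|^{-1} Y_{λ,μ} and T_{λ,μ} = e^{-πic/12} ω_λ δ_{λ,μ}, where z = Σ_λ d_λ² ω_λ ≠ 0 and c = 4·arg(z)/π, the matrices satisfy the partial Verlinde relations T S T S T = S, C T C = T, C S C = S, and T*T = 1, where C is the conjugation matrix C_{λ,μ} = δ_{λ,μ̄}. -/
open Matrix Complex

/-!
Write `T = diag(t ω)` with `t = e^{-πic/12}`. The choice of `c` makes `t³ z = |z|`, and `T` is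
unitary because `t` and every `ω_λ` have modulus one. Conjugation by `C` relabels indices by
`λ ↦ λ̄`, which fixes `ω` and, by the symmetries of `Y`, also `S`. The relation `TSTST = S`
reduces entrywise to the Gauss-sum identity `ω_λ ω_μ ∑_ν ω_ν Y_{λν} Y_{μν} = z Y_{λμ}`: expanding
`Y_{λν} Y_{μν}` with the product formula leaves `∑_ν d_ν ω_ν Y_{νκ} = z ω_κ⁻¹ d_κ`, the complex
conjugate of the identity `∑_ν d_ν ω_ν⁻¹ Y_{νκ} = z̄ ω_κ d_κ` which follows from Frobenius
reciprocity and the dimension equation.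
-/

theorem exp_mul_pow_three_mul_eq_norm (z : ℂ) :
    cexp (-(Real.pi * I * ((4 * z.arg / Real.pi : ℝ) : ℂ)) / 12) ^ 3 * z = ‖z‖ := by
  have hexp : cexp (-(Real.pi * I * ((4 * z.arg / Real.pi : ℝ) : ℂ)) / 12) ^ 3
      = cexp (-(z.arg * I)) := by
    rw [← Complex.exp_nat_mul]
    congr 1
    push_cast
    field_simp [Complex.ofReal_ne_zero.mpr Real.pi_ne_zero]
    ring
  calc _ = cexp (-(z.arg * I)) * (‖z‖ * cexp (z.arg * I)) := by
        rw [hexp, Complex.norm_mul_exp_arg_mul_I]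
    _ = ‖z‖ := by rw [mul_left_comm, ← Complex.exp_add, neg_add_cancel, Complex.exp_zero, mul_one]

theorem star_mul_self_eq_one_of_norm_eq_one {a : ℂ} (ha : ‖a‖ = 1) : star a * a = 1 := by
  rw [Complex.star_def, Complex.conj_mul', ha]
  norm_num

section FusionRing

variable {Δ : Type*} [Fintype Δ] {bar : Δ → Δ} {Nc : Δ → Δ → Δ → ℕ} {d : Δ → ℝ}
  {ω : Δ → ℂ} {Y : Δ → Δ → ℂ}

theorem sum_fusion_mul_dim_left (hFrob : ∀ l m n, Nc l m n = Nc n (bar m) l)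
    (hdbar : ∀ l, d (bar l) = d l) (hdim : ∀ l m, ∑ n, (Nc l m n : ℝ) * d n = d l * d m)
    (κ ρ : Δ) : ∑ ν, (Nc ν κ ρ : ℂ) * d ν = d ρ * d κ := by
  simp_rw [hFrob _ κ ρ]
  exact_mod_cast (hdim ρ (bar κ)).trans (by rw [hdbar])

theorem sum_dim_mul_inv_mul_Y (hω : ∀ l, ω l ≠ 0)
    (hY : ∀ m n, Y m n = ∑ l, (ω m * ω n / ω l) * (Nc m n l : ℂ) * (d l : ℂ))
    (hNd : ∀ κ ρ, ∑ ν, (Nc ν κ ρ : ℂ) * d ν = d ρ * d κ) (κ : Δ) :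
    ∑ ν, (d ν : ℂ) * (ω ν)⁻¹ * Y ν κ = (∑ ρ, (d ρ : ℂ) ^ 2 * (ω ρ)⁻¹) * (ω κ * d κ) := by
  calc ∑ ν, (d ν : ℂ) * (ω ν)⁻¹ * Y ν κ
      = ∑ ρ, (ω κ / ω ρ) * d ρ * ∑ ν, (Nc ν κ ρ : ℂ) * d ν := by
        simp_rw [hY, Finset.mul_sum]
        rw [Finset.sum_comm]
        refine Finset.sum_congr rfl fun ρ _ => Finset.sum_congr rfl fun ν _ => ?_
        field_simp [hω ν, hω ρ]
    _ = (∑ ρ, (d ρ : ℂ) ^ 2 * (ω ρ)⁻¹) * (ω κ * d κ) := by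
        simp_rw [hNd, Finset.sum_mul]
        refine Finset.sum_congr rfl fun ρ _ => ?_
        field_simp [hω ρ]

theorem sum_dim_mul_mul_Y (hbarbar : ∀ l, bar (bar l) = l) (hdbar : ∀ l, d (bar l) = d l)
    (hω : ∀ l, ‖ω l‖ = 1) (hωbar : ∀ l, ω (bar l) = ω l)
    (hYconj : ∀ l m, star (Y (bar l) m) = Y l m)
    (hinv : ∀ κ, ∑ ν, (d ν : ℂ) * (ω ν)⁻¹ * Y ν κ
      = (∑ ρ, (d ρ : ℂ) ^ 2 * (ω ρ)⁻¹) * (ω κ * d κ)) (κ : Δ) :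
    ∑ ν, (d ν : ℂ) * ω ν * Y ν κ = (∑ ρ, (d ρ : ℂ) ^ 2 * ω ρ) * (ω κ)⁻¹ * d κ := by
  have hconj : ∀ l, starRingEnd ℂ (ω l) = (ω l)⁻¹ := fun l => (Complex.inv_eq_conj (hω l)).symm
  have hbar_sum :
      ∑ ν, (d ν : ℂ) * (ω ν)⁻¹ * Y (bar ν) κ = ∑ ν, (d ν : ℂ) * (ω ν)⁻¹ * Y ν κ := by
    calc _ = ∑ ν, (d (bar ν) : ℂ) * (ω (bar ν))⁻¹ * Y (bar ν) κ := by simp only [hdbar, hωbar]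
      _ = _ := Equiv.sum_comp (Function.Involutive.toPerm bar hbarbar)
          fun ν => (d ν : ℂ) * (ω ν)⁻¹ * Y ν κ
  calc ∑ ν, (d ν : ℂ) * ω ν * Y ν κ
      = starRingEnd ℂ (∑ ν, (d ν : ℂ) * (ω ν)⁻¹ * Y (bar ν) κ) := by
        simp_rw [map_sum, map_mul, map_inv₀, Complex.conj_ofReal, hconj, inv_inv]
        exact Finset.sum_congr rfl fun ν _ => by rw [← hYconj ν κ]; rfl
    _ = (∑ ρ, (d ρ : ℂ) ^ 2 * ω ρ) * (ω κ)⁻¹ * d κ := by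
        rw [hbar_sum, hinv]
        simp only [map_mul, map_sum, map_inv₀, map_pow, Complex.conj_ofReal, hconj,
          inv_inv, mul_assoc]

theorem mul_mul_sum_mul_Y_mul_Y (hω : ∀ l, ω l ≠ 0)
    (hY : ∀ m n, Y m n = ∑ l, (ω m * ω n / ω l) * (Nc m n l : ℂ) * (d l : ℂ))
    (hYsym : ∀ l m, Y l m = Y m l)
    (hYprod : ∀ n m r, Y n r * Y m r = (d r : ℂ) * ∑ l, (Nc m n l : ℂ) * Y r l)
    (hdω : ∀ κ, ∑ ν, (d ν : ℂ) * ω ν * Y ν κ = (∑ ρ, (d ρ : ℂ) ^ 2 * ω ρ) * (ω κ)⁻¹ * d κ)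
    (l m : Δ) :
    ω l * ω m * ∑ ν, ω ν * (Y l ν * Y m ν) = (∑ ρ, (d ρ : ℂ) ^ 2 * ω ρ) * Y l m := by
  have hexpand : ∑ ν, ω ν * (Y l ν * Y m ν)
      = ∑ κ, (Nc m l κ : ℂ) * ∑ ν, (d ν : ℂ) * ω ν * Y ν κ := by
    simp_rw [hYprod l m, Finset.mul_sum]
    rw [Finset.sum_comm]
    exact Finset.sum_congr rfl fun κ _ => Finset.sum_congr rfl fun ν _ => by ring
  rw [hexpand, hYsym, hY m l, Finset.mul_sum, Finset.mul_sum]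
  refine Finset.sum_congr rfl fun κ _ => ?_
  rw [hdω]
  field_simp [hω κ]

end FusionRing

theorem Y_bar_bar {Δ : Type*} {bar : Δ → Δ} {Y : Δ → Δ → ℂ} (hYsym : ∀ l m, Y l m = Y m l)
    (hYconj : ∀ l m, star (Y (bar l) m) = Y l m) (l m : Δ) : Y (bar l) (bar m) = Y l m := by
  rw [← star_star (Y (bar l) (bar m)), hYconj, hYsym l (bar m), hYconj m l, hYsym m l]

theorem of_mul_ite_eq_diagonal {Δ R : Type*} [DecidableEq Δ] [MulZeroOneClass R] (a : R)
    (v : Δ → R) :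
    (of fun l m => a * v l * if l = m then 1 else 0) = diagonal fun l => a * v l := by
  ext l m
  simp [diagonal_apply]

section Matrices

variable {Δ R : Type*} [Fintype Δ] [DecidableEq Δ]

theorem of_ite_eq_involutive_mul_mul [Semiring R] {f : Δ → Δ} (hf : Function.Involutive f)
    (M : Matrix Δ Δ R) :
    (of fun l m => if l = f m then 1 else 0) * M * (of fun l m => if l = f m then 1 else 0)
      = M.submatrix f f := by
  have hperm : (of fun l m => if l = f m then (1 : R) else 0) = (hf.toPerm f).permMatrix R := by
    ext l m
    simp only [of_apply, Equiv.Perm.permMatrix, PEquiv.toMatrix_toPEquiv_apply,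
      Function.Involutive.coe_toPerm, Pi.single_apply]
    exact if_congr ⟨fun h => by rw [h, hf], fun h => by rw [h, hf]⟩ rfl rfl
  rw [hperm, PEquiv.toMatrix_toPEquiv_mul, PEquiv.mul_toMatrix_toPEquiv, submatrix_submatrix]
  rfl

theorem diagonal_mul_mul_diagonal_mul_mul_diagonal_apply [CommSemiring R] (v : Δ → R)
    (A B : Matrix Δ Δ R) (l m : Δ) :
    (diagonal v * A * diagonal v * B * diagonal v) l m
      = v l * v m * ∑ ν, v ν * (A l ν * B ν m) := by
  rw [mul_diagonal, mul_apply]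
  simp only [mul_diagonal, diagonal_mul, Finset.mul_sum, Finset.sum_mul]
  exact Finset.sum_congr rfl fun ν _ => by ring

end Matrices

theorem conjTranspose_diagonal_mul_self_of_norm_eq_one {Δ : Type*} [Fintype Δ] [DecidableEq Δ]
    {v : Δ → ℂ} (hv : ∀ l, ‖v l‖ = 1) : (diagonal v)ᴴ * diagonal v = 1 := by
  rw [diagonal_conjTranspose, diagonal_mul_diagonal, ← diagonal_one]
  exact congrArg diagonal (funext fun l => star_mul_self_eq_one_of_norm_eq_one (hv l))

theorem partial_Verlinde_modular_algebra_general
    {Δ : Type*} [Fintype Δ] [DecidableEq Δ] (bar : Δ → Δ)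
    (Nc : Δ → Δ → Δ → ℕ) (d : Δ → ℝ) (ω : Δ → ℂ) (Y : Δ → Δ → ℂ)
    (hFrob : ∀ l m n, Nc l m n = Nc (bar l) n m ∧ Nc l m n = Nc n (bar m) l)
    (hbarbar : ∀ l, bar (bar l) = l)
    (hdbar : ∀ l, d (bar l) = d l)
    (hdim : ∀ l m, ∑ n, (Nc l m n : ℝ) * d n = d l * d m)
    (hω : ∀ l, ‖ω l‖ = 1) (hωbar : ∀ l, ω (bar l) = ω l)
    (hY : ∀ m n, Y m n = ∑ l, (ω m * ω n / ω l) * (Nc m n l : ℂ) * (d l : ℂ))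
    (hYsym : ∀ l m, Y l m = Y m l)
    (hYconj : ∀ l m, star (Y (bar l) m) = Y l m)
    (hYprod : ∀ n m r, Y n r * Y m r = (d r : ℂ) * ∑ l, (Nc m n l : ℂ) * Y r l) :
    let z : ℂ := ∑ l, (d l : ℂ) ^ 2 * ω l
    let c : ℝ := 4 * z.arg / Real.pi
    let S : Matrix Δ Δ ℂ := Matrix.of fun l m => Y l m / (‖z‖ : ℂ)
    let T : Matrix Δ Δ ℂ := Matrix.of fun l m =>
      Complex.exp (-(Real.pi * Complex.I * c) / 12) * ω l * (if l = m then 1 else 0)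
    let C : Matrix Δ Δ ℂ := Matrix.of fun l m => if l = bar m then 1 else 0
    T * S * T * S * T = S ∧ C * T * C = T ∧ C * S * C = S ∧ Tᴴ * T = 1 := by
  intro z c S T C
  set t := cexp (-(Real.pi * I * c) / 12)
  have hω0 : ∀ l, ω l ≠ 0 := fun l => norm_ne_zero_iff.mp (by rw [hω l]; exact one_ne_zero)
  have hNd := sum_fusion_mul_dim_left (fun l m n => (hFrob l m n).2) hdbar hdim
  have hdω := sum_dim_mul_mul_Y hbarbar hdbar hω hωbar hYconj (sum_dim_mul_inv_mul_Y hω0 hY hNd)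
  have hgauss := mul_mul_sum_mul_Y_mul_Y hω0 hY hYsym hYprod hdω
  have hT : T = diagonal fun l => t * ω l := of_mul_ite_eq_diagonal t ω
  refine ⟨?_, ?_, ?_, ?_⟩
  · ext l m
    rw [hT, diagonal_mul_mul_diagonal_mul_mul_diagonal_apply]
    calc _ = t ^ 3 * (ω l * ω m * ∑ ν, ω ν * (Y l ν * Y m ν)) / ‖z‖ ^ 2 := by
          simp only [S, of_apply, Finset.mul_sum, Finset.sum_div]
          exact Finset.sum_congr rfl fun ν _ => by rw [hYsym ν m]; ring
      _ = t ^ 3 * z * Y l m / ‖z‖ ^ 2 := by rw [hgauss, mul_assoc]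
      _ = S l m := by
        rw [exp_mul_pow_three_mul_eq_norm z, sq, mul_comm _ (Y l m), mul_div_assoc,
          div_self_mul_self', ← div_eq_mul_inv]
        rfl
  · rw [of_ite_eq_involutive_mul_mul hbarbar]
    ext l m
    simp [T, hωbar, (Function.Involutive.injective hbarbar).eq_iff]
  · rw [of_ite_eq_involutive_mul_mul hbarbar]
    ext l m
    simp [S, Y_bar_bar hYsym hYconj]
  · have ht : ‖t‖ = 1 := by simp [t, Complex.norm_exp]
    rw [hT]
    exact conjTranspose_diagonal_mul_self_of_norm_eq_one fun l => by rw [norm_mul, ht, hω, one_mul]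

/-- With `S = |z|⁻¹ Y` and `T = e^{-πic/12} diag(ω)`, where
`z = ∑_λ d_λ² ω_λ ≠ 0` and `c = 4 arg(z)/π`, the matrices obey the partial
Verlinde modular algebra `TSTST = S`, `CTC = T`, `CSC = S`, `T*T = 1`,
with `C` the conjugation matrix `C_{λ,μ} = δ_{λ,μ̄}`. -/
theorem partial_Verlinde_modular_algebra
    {Δ : Type*} [Fintype Δ] [DecidableEq Δ] (z0 : Δ) (bar : Δ → Δ)
    (Nc : Δ → Δ → Δ → ℕ) (d : Δ → ℝ) (ω : Δ → ℂ) (Y : Δ → Δ → ℂ)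
    (hNcomm : ∀ l m n, Nc l m n = Nc m l n)
    (hNid : ∀ l m, Nc z0 l m = if l = m then 1 else 0)
    (hFrob : ∀ l m n, Nc l m n = Nc (bar l) n m ∧ Nc l m n = Nc n (bar m) l)
    (hassoc : ∀ l n r s, ∑ m, Nc l m n * Nc r s m = ∑ t, Nc l r t * Nc t s n)
    (hbarbar : ∀ l, bar (bar l) = l)
    (hd : ∀ l, 0 < d l) (hd0 : d z0 = 1) (hdbar : ∀ l, d (bar l) = d l)
    (hdim : ∀ l m, ∑ n, (Nc l m n : ℝ) * d n = d l * d m)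
    (hω : ∀ l, ‖ω l‖ = 1) (hω0 : ω z0 = 1) (hωbar : ∀ l, ω (bar l) = ω l)
    (hY : ∀ m n, Y m n = ∑ l, (ω m * ω n / ω l) * (Nc m n l : ℂ) * (d l : ℂ))
    (hYsym : ∀ l m, Y l m = Y m l)
    (hYconj : ∀ l m, star (Y (bar l) m) = Y l m)
    (hYprod : ∀ n m r, Y n r * Y m r = (d r : ℂ) * ∑ l, (Nc m n l : ℂ) * Y r l)
    (hz : (∑ l, (d l : ℂ) ^ 2 * ω l) ≠ 0) :
    let z : ℂ := ∑ l, (d l : ℂ) ^ 2 * ω l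
    let c : ℝ := 4 * z.arg / Real.pi
    let S : Matrix Δ Δ ℂ := Matrix.of fun l m => Y l m / (‖z‖ : ℂ)
    let T : Matrix Δ Δ ℂ := Matrix.of fun l m =>
      Complex.exp (-(Real.pi * Complex.I * c) / 12) * ω l * (if l = m then 1 else 0)
    let C : Matrix Δ Δ ℂ := Matrix.of fun l m => if l = bar m then 1 else 0
    T * S * T * S * T = S ∧ C * T * C = T ∧ C * S * C = S ∧ Tᴴ * T = 1 :=
  partial_Verlinde_modular_algebra_general bar Nc d ω Y hFrob hbarbar hdbar hdim hω hωbar hY hYsym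
    hYconj hYprod
end

section
/- Two weight eigenvectors y^λ and y^μ (with components y^λ_ν = Y_{λ,ν}) of the fusion matrices are either orthogonal, ⟨y^λ, y^μ⟩ = 0, or parallel, d_μ y^λ = d_λ y^μ. -/
/-- Two weight eigenvectors `y^λ` and `y^μ` (with components
`y^λ_ν = Y_{λ,ν}`) of the fusion matrices are either orthogonal,
`⟨y^λ, y^μ⟩ = 0`, or parallel, `d_μ y^λ = d_λ y^μ`. -/
theorem weight_vectors_orthogonal_or_parallel
    {Δ : Type*} [Fintype Δ] [DecidableEq Δ] (z0 : Δ) (bar : Δ → Δ)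
    (Nc : Δ → Δ → Δ → ℕ) (d : Δ → ℝ) (Y : Δ → Δ → ℂ)
    (hNcomm : ∀ l m n, Nc l m n = Nc m l n)
    (hNid : ∀ l m, Nc z0 l m = if l = m then 1 else 0)
    (hFrob : ∀ l m n, Nc l m n = Nc (bar l) n m ∧ Nc l m n = Nc n (bar m) l)
    (hassoc : ∀ l n r s, ∑ m, Nc l m n * Nc r s m = ∑ t, Nc l r t * Nc t s n)
    (hd : ∀ l, 0 < d l)
    (hYsym : ∀ l m, Y l m = Y m l)
    (hYconj : ∀ l m, star (Y (bar l) m) = Y l m)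
    -- the weight vector `y^l` is a simultaneous eigenvector of every fusion matrix
    -- `N_m` with eigenvalue `χ_l(m) = Y_{l,m}/d_l`
    (heig : ∀ l m r, ∑ n, (Nc r m n : ℂ) * Y l n = Y l m / (d l : ℂ) * Y l r) :
    ∀ l m, (∑ n, star (Y l n) * Y m n = 0) ∨
      (∀ n, (d m : ℂ) * Y l n = (d l : ℂ) * Y m n) := by
  intro l m
  by_cases hS : (∑ n, star (Y l n) * Y m n) = 0
  · exact Or.inl hS
  · right
    intro n
    have hdl : ((d l : ℂ)) ≠ 0 := by
      exact_mod_cast (hd l).ne'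
    have hdm : ((d m : ℂ)) ≠ 0 := by
      exact_mod_cast (hd m).ne'
    have hstar : ∀ a b, star (Y a (bar b)) = Y a b := by
      intro a b
      rw [hYsym a (bar b), hYconj b a, hYsym b a]
    -- starred eigenvector equation
    have heigstar : ∀ a k, ∑ s, (Nc k (bar n) s : ℂ) * star (Y a s)
        = Y a n / (d a : ℂ) * star (Y a k) := by
      intro a k
      have h := congrArg star (heig a (bar n) k)
      simp only [star_sum, star_mul', star_natCast, star_div₀, Complex.conj_ofReal] at h
      rw [hstar a n, show star ((d a : ℝ) : ℂ) = ((d a : ℝ) : ℂ) by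
        simp [Complex.star_def, Complex.conj_ofReal]] at h
      exact h
    -- compute the double sum in two ways
    have key : Y m n / (d m : ℂ) * (∑ s, star (Y l s) * Y m s)
        = Y l n / (d l : ℂ) * (∑ s, star (Y l s) * Y m s) := by
      have h1 : (∑ s, star (Y l s) * (∑ k, (Nc s n k : ℂ) * Y m k))
          = Y m n / (d m : ℂ) * ∑ s, star (Y l s) * Y m s := by
        simp_rw [heig m n]
        rw [Finset.mul_sum]
        exact Finset.sum_congr rfl fun s _ => by ring
      have h2 : (∑ s, star (Y l s) * (∑ k, (Nc s n k : ℂ) * Y m k))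
          = Y l n / (d l : ℂ) * ∑ s, star (Y l s) * Y m s := by
        have hswap : (∑ s, star (Y l s) * (∑ k, (Nc s n k : ℂ) * Y m k))
            = ∑ k, (∑ s, (Nc k (bar n) s : ℂ) * star (Y l s)) * Y m k := by
          simp_rw [Finset.mul_sum, Finset.sum_mul]
          rw [Finset.sum_comm]
          refine Finset.sum_congr rfl fun k _ => Finset.sum_congr rfl fun s _ => ?_
          rw [show Nc s n k = Nc k (bar n) s from (hFrob s n k).2]
          ring
        rw [hswap]
        simp_rw [heigstar l]
        rw [Finset.mul_sum]
        exact Finset.sum_congr rfl fun s _ => by ring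
      rw [← h1, h2]
    rcases mul_right_cancel₀ hS key with h
    field_simp at h
    linear_combination -h
end

section
/- If ⟨y^λ, y^0⟩ = δ_{λ,0} w for all λ, then the Y-matrix satisfies Σ_ρ (Y_{λ,ρ})* Y_{μ,ρ} = δ_{λ,μ} w; consequently S = w^{-1/2} Y is unitary. -/
/-!
Since `star (Y λ ρ) = Y λ̄ ρ`, the product formula turns `∑ ρ, star (Y λ ρ) * Y μ ρ` into
`∑ t, N_{μ,λ̄}^t ∑ ρ, d ρ * Y ρ t`. By symmetry of `Y` the inner sum is the complex conjugate of
`⟨y^t, y^0⟩ = δ_{t,0} w`, so only `t = 0` survives, and `N_{μ,λ̄}^0 = N_{0,λ}^μ = δ_{λ,μ}` by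
Frobenius reciprocity. As `Y` is symmetric this says `Yᴴ Y = w • 1`, i.e. `w^{-1/2} Y` is unitary.
-/

open Matrix Finset

section FusionOrthogonality

variable {Δ : Type*} {z0 : Δ} {bar : Δ → Δ} {Nc : Δ → Δ → Δ → ℕ} {d : Δ → ℝ}
  {Y : Δ → Δ → ℂ} {w : ℝ}

theorem fusion_coeff_dual_unit [DecidableEq Δ]
    (hNid : ∀ l m, Nc z0 l m = if l = m then 1 else 0)
    (hFrob : ∀ l m n, Nc l m n = Nc n (bar m) l) (l m : Δ) :
    Nc m (bar l) z0 = if l = m then 1 else 0 := by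
  rw [← hFrob z0 l m, hNid]

variable [Fintype Δ]

theorem sum_star_mul_eq_sum_fusion_mul
    (hYconj : ∀ l m, star (Y (bar l) m) = Y l m)
    (hYprod : ∀ n m r, Y n r * Y m r = (d r : ℂ) * ∑ l, (Nc m n l : ℂ) * Y r l) (l m : Δ) :
    ∑ r, star (Y l r) * Y m r = ∑ t, (Nc m (bar l) t : ℂ) * ∑ r, (d r : ℂ) * Y r t := by
  have hstar (r : Δ) : star (Y l r) = Y (bar l) r := by rw [← hYconj l r, star_star]
  simp_rw [hstar, hYprod, mul_sum]
  rw [sum_comm]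
  exact sum_congr rfl fun t _ => sum_congr rfl fun r _ => by ring

theorem sum_ofReal_mul_eq_ite [DecidableEq Δ] (hYsym : ∀ l m, Y l m = Y m l)
    (hnondeg : ∀ l, ∑ m, star (Y l m) * (d m : ℂ) = if l = z0 then (w : ℂ) else 0) (t : Δ) :
    ∑ r, (d r : ℂ) * Y r t = if t = z0 then (w : ℂ) else 0 := by
  calc ∑ r, (d r : ℂ) * Y r t = star (∑ r, star (Y t r) * (d r : ℂ)) := by
        simp [star_sum, hYsym t, mul_comm]
    _ = if t = z0 then (w : ℂ) else 0 := by
        rw [hnondeg]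
        split_ifs <;> simp

theorem sum_star_mul_eq_ite [DecidableEq Δ]
    (hNid : ∀ l m, Nc z0 l m = if l = m then 1 else 0)
    (hFrob : ∀ l m n, Nc l m n = Nc n (bar m) l)
    (hYsym : ∀ l m, Y l m = Y m l)
    (hYconj : ∀ l m, star (Y (bar l) m) = Y l m)
    (hYprod : ∀ n m r, Y n r * Y m r = (d r : ℂ) * ∑ l, (Nc m n l : ℂ) * Y r l)
    (hnondeg : ∀ l, ∑ m, star (Y l m) * (d m : ℂ) = if l = z0 then (w : ℂ) else 0) (l m : Δ) :
    ∑ r, star (Y l r) * Y m r = if l = m then (w : ℂ) else 0 := by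
  simp_rw [sum_star_mul_eq_sum_fusion_mul hYconj hYprod, sum_ofReal_mul_eq_ite hYsym hnondeg,
    mul_ite, mul_zero, sum_ite_eq', mem_univ, if_true, fusion_coeff_dual_unit hNid hFrob]
  split_ifs <;> simp

end FusionOrthogonality

theorem conjTranspose_mul_self_inv_sqrt_smul {𝕜 n : Type*} [RCLike 𝕜] [Fintype n] [DecidableEq n]
    {A : Matrix n n 𝕜} {w : ℝ} (hw : 0 < w) (hA : Aᴴ * A = (w : 𝕜) • 1) :
    (((√w : ℝ) : 𝕜)⁻¹ • A)ᴴ * (((√w : ℝ) : 𝕜)⁻¹ • A) = 1 := by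
  have hsqrt : (√w : 𝕜)⁻¹ * (√w : 𝕜)⁻¹ * (w : 𝕜) = 1 := by
    norm_cast
    rw [← mul_inv, ← sq, Real.sq_sqrt hw.le, inv_mul_cancel₀ hw.ne']
  rw [conjTranspose_smul, smul_mul_smul_comm, hA, smul_smul, star_inv₀, RCLike.star_def,
    RCLike.conj_ofReal, hsqrt, one_smul]

theorem Y_orthogonality_and_S_unitary_general
    {Δ : Type*} [Fintype Δ] [DecidableEq Δ] (z0 : Δ) (bar : Δ → Δ)
    (Nc : Δ → Δ → Δ → ℕ) (d : Δ → ℝ) (Y : Δ → Δ → ℂ)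
    (hNid : ∀ l m, Nc z0 l m = if l = m then 1 else 0)
    (hFrob : ∀ l m n, Nc l m n = Nc (bar l) n m ∧ Nc l m n = Nc n (bar m) l)
    (hd : ∀ l, 0 < d l)
    (hYsym : ∀ l m, Y l m = Y m l)
    (hYconj : ∀ l m, star (Y (bar l) m) = Y l m)
    (hYprod : ∀ n m r, Y n r * Y m r = (d r : ℂ) * ∑ l, (Nc m n l : ℂ) * Y r l)
    (hnondeg : ∀ l, ∑ m, star (Y l m) * (d m : ℂ) =
      if l = z0 then ((∑ n, d n ^ 2 : ℝ) : ℂ) else 0) :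
    (∀ l m, ∑ r, star (Y l r) * Y m r =
      if l = m then ((∑ n, d n ^ 2 : ℝ) : ℂ) else 0) ∧
    (let S : Matrix Δ Δ ℂ :=
      Matrix.of fun l m => Y l m / ((Real.sqrt (∑ n, d n ^ 2) : ℝ) : ℂ)
     Sᴴ * S = 1) := by
  have horth := sum_star_mul_eq_ite hNid (fun l m n => (hFrob l m n).2) hYsym hYconj hYprod hnondeg
  have hw : 0 < ∑ n, d n ^ 2 := sum_pos (fun n _ => pow_pos (hd n) 2) ⟨z0, mem_univ z0⟩
  have hYY : (of Y)ᴴ * of Y = ((∑ n, d n ^ 2 : ℝ) : ℂ) • 1 := by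
    ext l m
    simp only [mul_apply, conjTranspose_apply, of_apply, hYsym _ l, hYsym _ m, horth,
      Matrix.smul_apply, one_apply, smul_eq_mul, mul_ite, mul_one, mul_zero]
  refine ⟨horth, ?_⟩
  convert conjTranspose_mul_self_inv_sqrt_smul hw hYY using 2 <;>
    ext <;> simp [div_eq_inv_mul]

/-- If `⟨y^λ, y^0⟩ = δ_{λ,0} w` for all `λ`, then
`∑_ρ (Y_{λ,ρ})* Y_{μ,ρ} = δ_{λ,μ} w`; consequently `S = w^{-1/2} Y` is unitary. -/
theorem Y_orthogonality_and_S_unitary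
    {Δ : Type*} [Fintype Δ] [DecidableEq Δ] (z0 : Δ) (bar : Δ → Δ)
    (Nc : Δ → Δ → Δ → ℕ) (d : Δ → ℝ) (ω : Δ → ℂ) (Y : Δ → Δ → ℂ)
    (hNcomm : ∀ l m n, Nc l m n = Nc m l n)
    (hNid : ∀ l m, Nc z0 l m = if l = m then 1 else 0)
    (hFrob : ∀ l m n, Nc l m n = Nc (bar l) n m ∧ Nc l m n = Nc n (bar m) l)
    (hassoc : ∀ l n r s, ∑ m, Nc l m n * Nc r s m = ∑ t, Nc l r t * Nc t s n)
    (hd : ∀ l, 0 < d l) (hd0 : d z0 = 1) (hdbar : ∀ l, d (bar l) = d l)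
    (hdim : ∀ l m, ∑ n, (Nc l m n : ℝ) * d n = d l * d m)
    (hω : ∀ l, ‖ω l‖ = 1)
    (hY : ∀ m n, Y m n = ∑ l, (ω m * ω n / ω l) * (Nc m n l : ℂ) * (d l : ℂ))
    (hYsym : ∀ l m, Y l m = Y m l)
    (hYconj : ∀ l m, star (Y (bar l) m) = Y l m)
    (hYprod : ∀ n m r, Y n r * Y m r = (d r : ℂ) * ∑ l, (Nc m n l : ℂ) * Y r l)
    (hnondeg : ∀ l, ∑ m, star (Y l m) * (d m : ℂ) =
      if l = z0 then ((∑ n, d n ^ 2 : ℝ) : ℂ) else 0) :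
    (∀ l m, ∑ r, star (Y l r) * Y m r =
      if l = m then ((∑ n, d n ^ 2 : ℝ) : ℂ) else 0) ∧
    (let S : Matrix Δ Δ ℂ :=
      Matrix.of fun l m => Y l m / ((Real.sqrt (∑ n, d n ^ 2) : ℝ) : ℂ)
     Sᴴ * S = 1) :=
  Y_orthogonality_and_S_unitary_general z0 bar Nc d Y hNid hFrob hd hYsym hYconj hYprod hnondeg
end

section
/- Under the non-degeneracy condition, S² = C where C_{λ,μ} = δ_{λ,μ̄}, i.e., Σ_ρ Y_{λ,ρ} Y_{μ,ρ} = δ_{λ̄,μ} w for S = w^{-1/2} Y. -/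
open Matrix

/-!
Summing the product formula `Y_{λρ} Y_{μρ} = d_ρ ∑_ν N_{μλ}^ν Y_{ρν}` over `ρ` gives
`∑_ρ Y_{λρ} Y_{μρ} = ∑_ν N_{μλ}^ν ∑_ρ d_ρ Y_{ρν}`. By the conjugation symmetry of `Y`, the inner
sum is the non-degeneracy sum at `ν̄`, namely `w δ_{ν,0}`, and `N_{μλ}^0 = δ_{λ̄,μ}` by Frobenius
reciprocity. Dividing by `w` and using the symmetry of `Y` turns this into `S² = C`.
-/

namespace FusionRules

variable {Δ : Type*} [DecidableEq Δ] {z0 : Δ} {bar : Δ → Δ} {Nc : Δ → Δ → Δ → ℕ}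

theorem bar_zero (hNid : ∀ l m, Nc z0 l m = if l = m then 1 else 0)
    (hFrob : ∀ l m n, Nc l m n = Nc n (bar m) l) : bar z0 = z0 := by
  by_contra h
  simpa [hNid, h] using hFrob z0 z0 z0

theorem bar_involutive (hNcomm : ∀ l m n, Nc l m n = Nc m l n)
    (hNid : ∀ l m, Nc z0 l m = if l = m then 1 else 0)
    (hFrob : ∀ l m n, Nc l m n = Nc (bar l) n m) : Function.Involutive bar := by
  intro l
  have h : Nc l z0 l = Nc (bar (bar l)) z0 l := (hFrob l z0 l).trans (hFrob (bar l) l z0)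
  rw [hNcomm l, hNcomm (bar (bar l)), hNid, hNid] at h
  simpa using h

theorem fusion_coeff_zero (hNid : ∀ l m, Nc z0 l m = if l = m then 1 else 0)
    (hFrob : ∀ l m n, Nc l m n = Nc n (bar m) l) (l m : Δ) :
    Nc m l z0 = if bar l = m then 1 else 0 := by
  rw [hFrob, hNid]

variable [Fintype Δ] {d : Δ → ℝ} {Y : Δ → Δ → ℂ} {w : ℂ}

theorem sum_dim_mul_eq (hbar0 : bar z0 = z0) (hbar : Function.Involutive bar)
    (hYsym : ∀ l m, Y l m = Y m l) (hYconj : ∀ l m, star (Y (bar l) m) = Y l m)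
    (hnondeg : ∀ l, ∑ m, star (Y l m) * (d m : ℂ) = if l = z0 then w else 0) (ν : Δ) :
    ∑ ρ, (d ρ : ℂ) * Y ρ ν = if ν = z0 then w else 0 := by
  calc ∑ ρ, (d ρ : ℂ) * Y ρ ν = ∑ ρ, star (Y (bar ν) ρ) * (d ρ : ℂ) := by
        simp only [hYconj, hYsym ν, mul_comm]
    _ = if ν = z0 then w else 0 := by simp only [hnondeg, hbar.injective.eq_iff' hbar0]

theorem sum_mul_eq_fusion_coeff_zero_mul
    (hYprod : ∀ n m r, Y n r * Y m r = (d r : ℂ) * ∑ l, (Nc m n l : ℂ) * Y r l)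
    (hcol : ∀ ν, ∑ ρ, (d ρ : ℂ) * Y ρ ν = if ν = z0 then w else 0) (l m : Δ) :
    ∑ r, Y l r * Y m r = Nc m l z0 * w := by
  calc ∑ r, Y l r * Y m r = ∑ ν, (Nc m l ν : ℂ) * ∑ ρ, (d ρ : ℂ) * Y ρ ν := by
        simp only [hYprod, Finset.mul_sum, mul_left_comm (d _ : ℂ)]
        exact Finset.sum_comm
    _ = Nc m l z0 * w := by simp [hcol]

end FusionRules

theorem Matrix.of_div_sqrt_mul_self {Δ : Type*} [Fintype Δ] {Y : Δ → Δ → ℂ} {C : Matrix Δ Δ ℂ}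
    {w : ℝ} (hw : 0 < w) (h : of Y * of Y = (w : ℂ) • C) :
    (of fun l m => Y l m / (√w : ℂ)) * (of fun l m => Y l m / (√w : ℂ)) = C := by
  have hY : (of fun l m => Y l m / (√w : ℂ)) = (√w : ℂ)⁻¹ • of Y := by
    ext; simp [div_eq_inv_mul]
  rw [hY, smul_mul_smul_comm, h, smul_smul, ← mul_inv, ← Complex.ofReal_mul,
    Real.mul_self_sqrt hw.le, inv_mul_cancel₀ (by exact_mod_cast hw.ne'), one_smul]

theorem S_squared_eq_conjugation_general
    {Δ : Type*} [Fintype Δ] [DecidableEq Δ] (z0 : Δ) (bar : Δ → Δ)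
    (Nc : Δ → Δ → Δ → ℕ) (d : Δ → ℝ) (Y : Δ → Δ → ℂ)
    (hNcomm : ∀ l m n, Nc l m n = Nc m l n)
    (hNid : ∀ l m, Nc z0 l m = if l = m then 1 else 0)
    (hFrob : ∀ l m n, Nc l m n = Nc (bar l) n m ∧ Nc l m n = Nc n (bar m) l)
    (hd : ∀ l, 0 < d l)
    (hYsym : ∀ l m, Y l m = Y m l)
    (hYconj : ∀ l m, star (Y (bar l) m) = Y l m)
    (hYprod : ∀ n m r, Y n r * Y m r = (d r : ℂ) * ∑ l, (Nc m n l : ℂ) * Y r l)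
    (hnondeg : ∀ l, ∑ m, star (Y l m) * (d m : ℂ) =
      if l = z0 then ((∑ n, d n ^ 2 : ℝ) : ℂ) else 0) :
    (∀ l m, ∑ r, Y l r * Y m r =
      if bar l = m then ((∑ n, d n ^ 2 : ℝ) : ℂ) else 0) ∧
    (let S : Matrix Δ Δ ℂ :=
       Matrix.of fun l m => Y l m / ((Real.sqrt (∑ n, d n ^ 2) : ℝ) : ℂ)
     let C : Matrix Δ Δ ℂ := Matrix.of fun l m => if l = bar m then 1 else 0
     S * S = C) := by
  have hbar := FusionRules.bar_involutive hNcomm hNid fun l m n => (hFrob l m n).1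
  have hcol := FusionRules.sum_dim_mul_eq (FusionRules.bar_zero hNid fun l m n => (hFrob l m n).2)
    hbar hYsym hYconj hnondeg
  have horth : ∀ l m, ∑ r, Y l r * Y m r =
      if bar l = m then ((∑ n, d n ^ 2 : ℝ) : ℂ) else 0 := fun l m => by
    rw [FusionRules.sum_mul_eq_fusion_coeff_zero_mul hYprod hcol,
      FusionRules.fusion_coeff_zero hNid fun l m n => (hFrob l m n).2]
    split_ifs <;> simp
  refine ⟨horth, Matrix.of_div_sqrt_mul_self ?_ ?_⟩
  · exact Finset.sum_pos (fun n _ => pow_pos (hd n) 2) ⟨z0, Finset.mem_univ z0⟩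
  · ext l m
    simp only [mul_apply, hYsym _ m, horth, Matrix.smul_apply, of_apply, hbar.eq_iff, smul_eq_mul]
    split_ifs <;> simp

/-- Under the non-degeneracy condition, `S² = C` where
`C_{λ,μ} = δ_{λ,μ̄}`, i.e. `∑_ρ Y_{λ,ρ} Y_{μ,ρ} = δ_{λ̄,μ} w` for `S = w^{-1/2} Y`. -/
theorem S_squared_eq_conjugation
    {Δ : Type*} [Fintype Δ] [DecidableEq Δ] (z0 : Δ) (bar : Δ → Δ)
    (Nc : Δ → Δ → Δ → ℕ) (d : Δ → ℝ) (ω : Δ → ℂ) (Y : Δ → Δ → ℂ)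
    (hNcomm : ∀ l m n, Nc l m n = Nc m l n)
    (hNid : ∀ l m, Nc z0 l m = if l = m then 1 else 0)
    (hFrob : ∀ l m n, Nc l m n = Nc (bar l) n m ∧ Nc l m n = Nc n (bar m) l)
    (hassoc : ∀ l n r s, ∑ m, Nc l m n * Nc r s m = ∑ t, Nc l r t * Nc t s n)
    (hd : ∀ l, 0 < d l) (hd0 : d z0 = 1) (hdbar : ∀ l, d (bar l) = d l)
    (hdim : ∀ l m, ∑ n, (Nc l m n : ℝ) * d n = d l * d m)
    (hω : ∀ l, ‖ω l‖ = 1)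
    (hY : ∀ m n, Y m n = ∑ l, (ω m * ω n / ω l) * (Nc m n l : ℂ) * (d l : ℂ))
    (hYsym : ∀ l m, Y l m = Y m l)
    (hYconj : ∀ l m, star (Y (bar l) m) = Y l m)
    (hYprod : ∀ n m r, Y n r * Y m r = (d r : ℂ) * ∑ l, (Nc m n l : ℂ) * Y r l)
    (hnondeg : ∀ l, ∑ m, star (Y l m) * (d m : ℂ) =
      if l = z0 then ((∑ n, d n ^ 2 : ℝ) : ℂ) else 0) :
    (∀ l m, ∑ r, Y l r * Y m r =
      if bar l = m then ((∑ n, d n ^ 2 : ℝ) : ℂ) else 0) ∧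
    (let S : Matrix Δ Δ ℂ :=
       Matrix.of fun l m => Y l m / ((Real.sqrt (∑ n, d n ^ 2) : ℝ) : ℂ)
     let C : Matrix Δ Δ ℂ := Matrix.of fun l m => if l = bar m then 1 else 0
     S * S = C) :=
  S_squared_eq_conjugation_general z0 bar Nc d Y hNcomm hNid hFrob hd hYsym hYconj hYprod hnondeg
end

section
/- Under the non-degeneracy condition, the Verlinde formula holds: N_{λ,μ}^ν = Σ_ρ S_{λ,ρ} S_{μ,ρ} (S_{ν,ρ})* / S_{0,ρ}, where S = w^{-1/2} Y. -/
/-!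
Writing `conj Y_{p,ρ} = Y_{p̄,ρ}` and expanding `Y_{p̄,ρ} Y_{t,ρ}` by the product formula, the
non-degeneracy condition gives row orthogonality `∑_ρ conj Y_{p,ρ} Y_{t,ρ} = N_{t,p̄}^0 w = δ_{t,p} w`.
The product formula also expands `Y_{λ,ρ} Y_{μ,ρ} / d_ρ` as `∑_ν N_{λ,μ}^ν Y_{ν,ρ}`, so orthogonality
reads `N_{λ,μ}^ν` off the Verlinde sum; the normalisations `w^{-1/2}` cancel against
`S_{0,ρ} = d_ρ / √w`.
-/

open Finset

namespace Verlinde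

variable {Δ : Type*} [DecidableEq Δ] {z0 : Δ} {bar : Δ → Δ} {Nc : Δ → Δ → Δ → ℕ}

theorem eq_of_fusion_unit_eq_one (hNid : ∀ l m, Nc z0 l m = if l = m then 1 else 0) {a b : Δ}
    (h : Nc z0 a b = 1) : a = b := by
  by_contra hab
  simp [hNid, hab] at h

theorem bar_involutive (hNcomm : ∀ l m n, Nc l m n = Nc m l n)
    (hNid : ∀ l m, Nc z0 l m = if l = m then 1 else 0)
    (hFrob : ∀ l m n, Nc l m n = Nc (bar l) n m) : Function.Involutive bar := fun k =>
  eq_of_fusion_unit_eq_one hNid <| by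
    rw [hNcomm, ← hFrob, ← hFrob, hNcomm, hNid, if_pos rfl]

theorem bar_unit (hNcomm : ∀ l m n, Nc l m n = Nc m l n)
    (hNid : ∀ l m, Nc z0 l m = if l = m then 1 else 0)
    (hFrob : ∀ l m n, Nc l m n = Nc (bar l) n m) : bar z0 = z0 :=
  eq_of_fusion_unit_eq_one hNid <| by rw [hNcomm, ← hFrob, hNid, if_pos rfl]

variable [Fintype Δ] {d : Δ → ℝ} {Y : Δ → Δ → ℂ} {w : ℂ}

theorem sum_Y_mul_dim (hinv : Function.Involutive bar) (hbar : bar z0 = z0)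
    (hYconj : ∀ l m, star (Y (bar l) m) = Y l m)
    (hnondeg : ∀ l, ∑ m, star (Y l m) * (d m : ℂ) = if l = z0 then w else 0) (k : Δ) :
    ∑ r, Y k r * (d r : ℂ) = if k = z0 then w else 0 := by
  simp_rw [← hYconj k, hnondeg, hinv.eq_iff, hbar]

theorem sum_star_Y_mul_Y (hinv : Function.Involutive bar)
    (hNid : ∀ l m, Nc z0 l m = if l = m then 1 else 0)
    (hFrob : ∀ l m n, Nc l m n = Nc n (bar m) l)
    (hYconj : ∀ l m, star (Y (bar l) m) = Y l m) (hYsym : ∀ l m, Y l m = Y m l)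
    (hYprod : ∀ n m r, Y n r * Y m r = (d r : ℂ) * ∑ l, (Nc m n l : ℂ) * Y r l)
    (hrow : ∀ k, ∑ r, Y k r * (d r : ℂ) = if k = z0 then w else 0) (p t : Δ) :
    ∑ r, star (Y p r) * Y t r = if t = p then w else 0 := by
  have hstar : ∀ k r, star (Y k r) = Y (bar k) r := fun k r => by
    simpa only [hinv k] using hYconj (bar k) r
  calc ∑ r, star (Y p r) * Y t r
      = ∑ r, ∑ u, (Nc t (bar p) u : ℂ) * (Y u r * d r) := sum_congr rfl fun r _ => by
        rw [hstar, hYprod, mul_sum]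
        exact sum_congr rfl fun u _ => by rw [hYsym r u]; ring
    _ = ∑ u, (Nc t (bar p) u : ℂ) * ∑ r, Y u r * d r := by
        rw [sum_comm]; simp_rw [mul_sum]
    _ = Nc t (bar p) z0 * w := by simp_rw [hrow, mul_ite, mul_zero, sum_ite_eq', mem_univ, if_true]
    _ = if t = p then w else 0 := by
        rw [hFrob, hinv, hNid]
        by_cases h : t = p <;> simp [h, Ne.symm]

theorem sum_Y_mul_Y_mul_star_Y_div (hYsym : ∀ l m, Y l m = Y m l)
    (hYprod : ∀ n m r, Y n r * Y m r = (d r : ℂ) * ∑ l, (Nc m n l : ℂ) * Y r l)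
    (horth : ∀ p t, ∑ r, star (Y p r) * Y t r = if t = p then w else 0)
    (hd : ∀ r, d r ≠ 0) (hw : w ≠ 0) (l m n : Δ) :
    ∑ r, Y l r * Y m r * star (Y n r) / (d r * w) = Nc l m n := by
  calc ∑ r, Y l r * Y m r * star (Y n r) / (d r * w)
      = (∑ t, (Nc l m t : ℂ) * ∑ r, star (Y n r) * Y t r) / w := by
        simp_rw [mul_sum, sum_div]
        rw [sum_comm]
        refine sum_congr rfl fun r _ => ?_
        rw [mul_comm (Y l r), hYprod, mul_assoc, mul_div_mul_left _ _ (mod_cast hd r), sum_mul,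
          sum_div]
        exact sum_congr rfl fun t _ => by rw [hYsym r t]; ring
    _ = Nc l m n := by simp_rw [horth, mul_ite, mul_zero, sum_ite_eq', mem_univ, if_true, mul_div_cancel_right₀ _ hw]

theorem div_mul_div_mul_star_div_div (a b c e : ℂ) (s : ℝ) :
    a / s * (b / s) * star (c / s) / (e / s) = a * b * star c / (e * (s ^ 2 : ℝ)) := by
  rw [star_div₀, Complex.star_def, Complex.conj_ofReal, ← Complex.star_def]
  push_cast
  field_simp

end Verlinde

theorem Verlinde_formula_general
    {Δ : Type*} [Fintype Δ] [DecidableEq Δ] (z0 : Δ) (bar : Δ → Δ)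
    (Nc : Δ → Δ → Δ → ℕ) (d : Δ → ℝ) (Y : Δ → Δ → ℂ)
    (hNcomm : ∀ l m n, Nc l m n = Nc m l n)
    (hNid : ∀ l m, Nc z0 l m = if l = m then 1 else 0)
    (hFrob : ∀ l m n, Nc l m n = Nc (bar l) n m ∧ Nc l m n = Nc n (bar m) l)
    (hd : ∀ l, 0 < d l)
    (hYsym : ∀ l m, Y l m = Y m l)
    (hYconj : ∀ l m, star (Y (bar l) m) = Y l m)
    (hY0 : ∀ m, Y z0 m = (d m : ℂ))
    (hYprod : ∀ n m r, Y n r * Y m r = (d r : ℂ) * ∑ l, (Nc m n l : ℂ) * Y r l)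
    (hnondeg : ∀ l, ∑ m, star (Y l m) * (d m : ℂ) =
      if l = z0 then ((∑ n, d n ^ 2 : ℝ) : ℂ) else 0) :
    let S : Δ → Δ → ℂ :=
      fun l m => Y l m / ((Real.sqrt (∑ n, d n ^ 2) : ℝ) : ℂ)
    ∀ l m n, (Nc l m n : ℂ) = ∑ r, S l r * S m r * star (S n r) / S z0 r := by
  intro S l m n
  have hw : 0 < ∑ n, d n ^ 2 := sum_pos (fun i _ => pow_pos (hd i) 2) ⟨z0, mem_univ z0⟩
  have hinv := Verlinde.bar_involutive hNcomm hNid fun l m n => (hFrob l m n).1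
  have hrow := Verlinde.sum_Y_mul_dim hinv
    (Verlinde.bar_unit hNcomm hNid fun l m n => (hFrob l m n).1) hYconj hnondeg
  have horth := Verlinde.sum_star_Y_mul_Y hinv hNid (fun l m n => (hFrob l m n).2) hYconj hYsym
    hYprod hrow
  rw [← Verlinde.sum_Y_mul_Y_mul_star_Y_div hYsym hYprod horth (fun r => (hd r).ne')
    (mod_cast hw.ne') l m n]
  refine sum_congr rfl fun r _ => ?_
  simp only [S]
  rw [Verlinde.div_mul_div_mul_star_div_div, hY0, Real.sq_sqrt hw.le]

/-- Under the non-degeneracy condition the Verlinde formula holds: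
`N_{λ,μ}^ν = ∑_ρ S_{λ,ρ} S_{μ,ρ} (S_{ν,ρ})* / S_{0,ρ}`, where `S = w^{-1/2} Y`. -/
theorem Verlinde_formula
    {Δ : Type*} [Fintype Δ] [DecidableEq Δ] (z0 : Δ) (bar : Δ → Δ)
    (Nc : Δ → Δ → Δ → ℕ) (d : Δ → ℝ) (ω : Δ → ℂ) (Y : Δ → Δ → ℂ)
    (hNcomm : ∀ l m n, Nc l m n = Nc m l n)
    (hNid : ∀ l m, Nc z0 l m = if l = m then 1 else 0)
    (hFrob : ∀ l m n, Nc l m n = Nc (bar l) n m ∧ Nc l m n = Nc n (bar m) l)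
    (hassoc : ∀ l n r s, ∑ m, Nc l m n * Nc r s m = ∑ t, Nc l r t * Nc t s n)
    (hd : ∀ l, 0 < d l) (hd0 : d z0 = 1) (hdbar : ∀ l, d (bar l) = d l)
    (hdim : ∀ l m, ∑ n, (Nc l m n : ℝ) * d n = d l * d m)
    (hω : ∀ l, ‖ω l‖ = 1)
    (hY : ∀ m n, Y m n = ∑ l, (ω m * ω n / ω l) * (Nc m n l : ℂ) * (d l : ℂ))
    (hYsym : ∀ l m, Y l m = Y m l)
    (hYconj : ∀ l m, star (Y (bar l) m) = Y l m)
    (hY0 : ∀ m, Y z0 m = (d m : ℂ))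
    (hYprod : ∀ n m r, Y n r * Y m r = (d r : ℂ) * ∑ l, (Nc m n l : ℂ) * Y r l)
    (hnondeg : ∀ l, ∑ m, star (Y l m) * (d m : ℂ) =
      if l = z0 then ((∑ n, d n ^ 2 : ℝ) : ℂ) else 0) :
    let S : Δ → Δ → ℂ :=
      fun l m => Y l m / ((Real.sqrt (∑ n, d n ^ 2) : ℝ) : ℂ)
    ∀ l m n, (Nc l m n : ℂ) = ∑ r, S l r * S m r * star (S n r) / S z0 r :=
  Verlinde_formula_general z0 bar Nc d Y hNcomm hNid hFrob hd hYsym hYconj hY0 hYprod hnondeg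
end
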